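/- arXiv:2605.00533 — 4 statements merged into one kernel-verified Lean document; each statement's English description precedes it below -/
import Mathlib

section
/- Let n = n₁ + n₂ with n₁, n₂ ≥ 1, and let C be a symmetric positive definite real n×n matrix with block decomposition C = [[C₁₁, C₁₂],[C₂₁, C₂₂]], where C_{ij} has size n_i × n_j and C₂₁ = C₁₂ᵀ. For τ ∈ ℝ define C(τ) = [[C₁₁, τC₁₂],[τC₂₁, C₂₂]]. Then for every τ ∈ [0,1], the matrix C(τ) is symmetric positive definite. -/
/-!
With `S = fromBlocks 1 0 0 (-1)`, the congruence `S * C * Sᴴ` flips the sign of the off-diagonal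
blocks, so it is again positive definite. For `|τ| ≤ 1`, `C(τ)` is the convex combination
`(1 + τ) / 2 • C + (1 - τ) / 2 • S * C * Sᴴ` of two positive definite matrices.
-/

open Matrix

theorem fromBlocks_sub_smul_offDiag {l m n o S α : Type*} [CommRing S] [AddCommGroup α]
    [Module S α] (A : Matrix l n α) (B : Matrix l o α) (C : Matrix m n α) (D : Matrix m o α)
    {a b : S} (hab : a + b = 1) :
    fromBlocks A ((a - b) • B) ((a - b) • C) D =
      a • fromBlocks A B C D + b • fromBlocks A (-B) (-C) D := by
  obtain rfl : b = 1 - a := eq_sub_of_add_eq' hab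
  rw [fromBlocks_smul, fromBlocks_smul, fromBlocks_add]
  congr 1 <;> module

open scoped ComplexOrder in
theorem Matrix.PosDef.smul_add_smul {n 𝕜 : Type*} [RCLike 𝕜] {M N : Matrix n n 𝕜}
    (hM : M.PosDef) (hN : N.PosDef) {a b : ℝ} (ha : 0 ≤ a) (hb : 0 ≤ b) (hab : 0 < a + b) :
    (a • M + b • N).PosDef := by
  rcases ha.lt_or_eq with ha | rfl
  · exact (hM.smul ha).add_posSemidef (hN.posSemidef.smul hb)
  · simpa using hN.smul (by simpa using hab)

variable {m n : Type*} [Fintype m] [Fintype n] [DecidableEq m] [DecidableEq n]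

theorem Matrix.PosDef.fromBlocks_neg_offDiag {R : Type*} [CommRing R] [PartialOrder R]
    [StarRing R] [StarOrderedRing R] {A : Matrix m m R} {B : Matrix m n R} {C : Matrix n m R}
    {D : Matrix n n R} (h : (fromBlocks A B C D).PosDef) :
    (fromBlocks A (-B) (-C) D).PosDef := by
  set S : Matrix (m ⊕ n) (m ⊕ n) R := fromBlocks 1 0 0 (-1)
  have hSS : S * S = 1 := by simp [S, fromBlocks_multiply]
  convert h.mul_mul_conjTranspose_same (vecMul_injective_of_isUnit ⟨⟨S, S, hSS, hSS⟩, rfl⟩)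
    using 1
  simp [S, fromBlocks_multiply, fromBlocks_conjTranspose]

open scoped ComplexOrder in
theorem Matrix.PosDef.fromBlocks_smul_offDiag {𝕜 : Type*} [RCLike 𝕜]
    {A : Matrix m m 𝕜} {B : Matrix m n 𝕜} {C : Matrix n m 𝕜} {D : Matrix n n 𝕜}
    (h : (fromBlocks A B C D).PosDef) {τ : ℝ} (hτ : |τ| ≤ 1) :
    (fromBlocks A (τ • B) (τ • C) D).PosDef := by
  obtain ⟨hτ₁, hτ₂⟩ := abs_le.mp hτ
  have hsplit := fromBlocks_sub_smul_offDiag A B C D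
    (a := (1 + τ) / 2) (b := (1 - τ) / 2) (by ring)
  rw [show (1 + τ) / 2 - (1 - τ) / 2 = τ by ring] at hsplit
  rw [hsplit]
  exact h.smul_add_smul h.fromBlocks_neg_offDiag (by linarith) (by linarith) (by linarith)

theorem interpolated_posDef_general
    (n₁ n₂ : ℕ)
    (C₁₁ : Matrix (Fin n₁) (Fin n₁) ℝ) (C₁₂ : Matrix (Fin n₁) (Fin n₂) ℝ)
    (C₂₁ : Matrix (Fin n₂) (Fin n₁) ℝ) (C₂₂ : Matrix (Fin n₂) (Fin n₂) ℝ)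
    (hC : (fromBlocks C₁₁ C₁₂ C₂₁ C₂₂).PosDef)
    (τ : ℝ) (hτ : τ ∈ Set.Icc (0 : ℝ) 1) :
    (fromBlocks C₁₁ (τ • C₁₂) (τ • C₂₁) C₂₂).PosDef :=
  hC.fromBlocks_smul_offDiag (abs_le.mpr ⟨by linarith [hτ.1], hτ.2⟩)

/-- Interpolated positive definiteness: scaling the off-diagonal blocks of a symmetric
positive definite matrix by `τ ∈ [0,1]` preserves positive definiteness. -/
theorem interpolated_posDef
    (n₁ n₂ : ℕ) (hn₁ : 1 ≤ n₁) (hn₂ : 1 ≤ n₂)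
    (C₁₁ : Matrix (Fin n₁) (Fin n₁) ℝ) (C₁₂ : Matrix (Fin n₁) (Fin n₂) ℝ)
    (C₂₁ : Matrix (Fin n₂) (Fin n₁) ℝ) (C₂₂ : Matrix (Fin n₂) (Fin n₂) ℝ)
    (hsym : C₂₁ = C₁₂ᵀ)
    (hC : (fromBlocks C₁₁ C₁₂ C₂₁ C₂₂).PosDef)
    (τ : ℝ) (hτ : τ ∈ Set.Icc (0 : ℝ) 1) :
    (fromBlocks C₁₁ (τ • C₁₂) (τ • C₂₁) C₂₂).PosDef :=
  interpolated_posDef_general n₁ n₂ C₁₁ C₁₂ C₂₁ C₂₂ hC τ hτ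
end

section
/- Let n = n₁ + n₂ with n₁, n₂ ≥ 1, let C be a symmetric positive semidefinite real n×n matrix with block decomposition C = [[C₁₁, C₁₂],[C₂₁, C₂₂]] where C₂₁ = C₁₂ᵀ, and for τ ∈ ℝ define C(τ) = [[C₁₁, τC₁₂],[τC₂₁, C₂₂]]. For any nonempty subset J ⊆ {1,…,n}, let C(τ)_J denote the principal submatrix of C(τ) with rows and columns indexed by J. Then for every such J and every τ ∈ [0,1], the quantity a_J(τ) := −(d/dτ) det(C(τ)_J) is nonnegative; equivalently, the polynomial function τ ↦ det(C(τ)_J) has nonpositive derivative at every τ ∈ [0,1]. -/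
/-!
Write the principal submatrix as `M(t) = K + t • N`, where `K` comes from the diagonal blocks and
`N` from the off-diagonal ones. Conjugating by the signature matrix `U = diag(±1)` of the block
decomposition sends `M(t)` to `M(-t)`; hence `M(-1)` is positive semidefinite, so is every `M(t)`
with `|t| ≤ 1`, and `det M(-t) = det M(t)`. For `0 ≤ s ≤ t ≤ 1` the matrix `M(s)` is a convex
combination of `M(t)` and `M(-t)`, so log-concavity of the determinant on positive semidefinite
matrices (weighted AM-GM on the eigenvalues of `X^{-1/2} Y X^{-1/2}`) gives `det M(s) ≥ det M(t)`.
Thus `t ↦ det M(t)` is antitone on `[0, 1]` and its derivative there is nonpositive.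
-/

open Matrix

namespace Matrix

section LogConcavity

variable {ι : Type*} [Fintype ι] [DecidableEq ι]

theorem PosSemidef.det_rpow_le_det_smul_one_add_smul {Q : Matrix ι ι ℝ} (hQ : Q.PosSemidef)
    {a b : ℝ} (ha : 0 ≤ a) (hb : 0 ≤ b) (hab : a + b = 1) :
    Q.det ^ b ≤ (a • 1 + b • Q).det := by
  have hsa : IsSelfAdjoint Q := hQ.isHermitian
  have hdet : (a • 1 + b • Q).det = ∏ i, (a + b * hQ.isHermitian.eigenvalues i) := by
    rw [← cfc_const_mul_id b Q, Algebra.smul_def, mul_one, ← cfc_const_add a _ Q,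
      hQ.isHermitian.cfc_eq]
    simp [IsHermitian.cfc, -Unitary.conjStarAlgAut_apply]
  have hev := hQ.eigenvalues_nonneg
  rw [hdet, hQ.isHermitian.det_eq_prod_eigenvalues]
  simp only [RCLike.ofReal_real_eq_id, id]
  rw [← Real.finsetProd_rpow _ _ fun i _ => hev i]
  gcongr with i
  · exact fun i _ => Real.rpow_nonneg (hev i) b
  · simpa using Real.geom_mean_le_arith_mean2_weighted ha hb zero_le_one (hev i) hab

open scoped MatrixOrder in
theorem PosDef.det_rpow_mul_det_rpow_le_det_add {X Y : Matrix ι ι ℝ} (hX : X.PosDef)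
    (hY : Y.PosSemidef) {a b : ℝ} (ha : 0 ≤ a) (hb : 0 ≤ b) (hab : a + b = 1) :
    X.det ^ a * Y.det ^ b ≤ (a • X + b • Y).det := by
  set S := CFC.sqrt X
  have hSX : S * S = X := CFC.sqrt_mul_sqrt_self X hX.posSemidef.nonneg
  have hSH : Sᴴ = S := (nonneg_iff_posSemidef.mp (CFC.sqrt_nonneg X)).isHermitian.eq
  have hdX := hX.det_pos
  have hS : IsUnit S.det := by
    refine isUnit_iff_ne_zero.mpr fun h => hdX.ne' ?_
    rw [← hSX, det_mul, h, zero_mul]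
  set Q := S⁻¹ * Y * S⁻¹
  have hQ : Q.PosSemidef := by
    have := hY.conjTranspose_mul_mul_same S⁻¹
    rwa [conjTranspose_nonsing_inv, hSH] at this
  have hSQS : S * Q * S = Y := by
    simp only [Q, ← Matrix.mul_assoc, mul_nonsing_inv S hS, Matrix.one_mul]
    rw [Matrix.mul_assoc, nonsing_inv_mul S hS, Matrix.mul_one]
  clear_value Q
  have hdQ : Q.det = Y.det / X.det := by
    rw [eq_div_iff hdX.ne', ← hSQS, ← hSX, det_mul, det_mul, det_mul]
    ring
  have hsplit : a • X + b • Y = S * (a • 1 + b • Q) * S := by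
    rw [Matrix.mul_add, Matrix.add_mul, Matrix.mul_smul, Matrix.smul_mul, Matrix.mul_smul,
      Matrix.smul_mul, Matrix.mul_one, hSX, hSQS]
  calc X.det ^ a * Y.det ^ b = X.det * Q.det ^ b := by
        rw [hdQ, Real.div_rpow hY.det_nonneg hdX.le, mul_div_assoc', eq_div_iff (by positivity),
          mul_right_comm, ← Real.rpow_add hdX, hab, Real.rpow_one]
    _ ≤ X.det * (a • 1 + b • Q).det := by
        gcongr
        exact hQ.det_rpow_le_det_smul_one_add_smul ha hb hab
    _ = (a • X + b • Y).det := by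
        rw [hsplit, det_mul, det_mul, ← hSX, det_mul]
        ring

theorem PosSemidef.det_le_det_add_of_det_eq {X Y : Matrix ι ι ℝ} (hX : X.PosSemidef)
    (hY : Y.PosSemidef) (hdet : Y.det = X.det) {a b : ℝ} (ha : 0 ≤ a) (hb : 0 ≤ b)
    (hab : a + b = 1) : X.det ≤ (a • X + b • Y).det := by
  by_cases hX0 : X.det = 0
  · rw [hX0]
    exact ((hX.smul ha).add (hY.smul hb)).det_nonneg
  have hXpd : X.PosDef := hX.posDef_iff_isUnit.mpr ((isUnit_iff_isUnit_det X).mpr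
    (isUnit_iff_ne_zero.mpr hX0))
  calc X.det = X.det ^ a * Y.det ^ b := by
        rw [hdet, ← Real.rpow_add hXpd.det_pos, hab, Real.rpow_one]
    _ ≤ (a • X + b • Y).det := hXpd.det_rpow_mul_det_rpow_le_det_add hY ha hb hab

end LogConcavity

section SignSymmetricPencil

variable {ι : Type*} [Fintype ι] {K N U : Matrix ι ι ℝ}

theorem conjTranspose_mul_add_smul_mul (hK : Uᴴ * K * U = K) (hN : Uᴴ * N * U = -N) (t : ℝ) :
    Uᴴ * (K + t • N) * U = K + (-t) • N := by
  rw [Matrix.mul_add, Matrix.add_mul, Matrix.mul_smul, Matrix.smul_mul, hK, hN, smul_neg,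
    neg_smul]

theorem PosSemidef.add_smul_of_mem_Icc (hKN : (K + N).PosSemidef) (hK : Uᴴ * K * U = K)
    (hN : Uᴴ * N * U = -N) {t : ℝ} (ht : t ∈ Set.Icc (-1 : ℝ) 1) : (K + t • N).PosSemidef := by
  have hKN' : (K + (-1 : ℝ) • N).PosSemidef := by
    rw [← conjTranspose_mul_add_smul_mul hK hN, one_smul]
    exact hKN.conjTranspose_mul_mul_same U
  have hcomb : K + t • N = ((1 + t) / 2) • (K + N) + ((1 - t) / 2) • (K + (-1 : ℝ) • N) := by
    module
  rw [hcomb]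
  exact (hKN.smul (by linarith [ht.1])).add (hKN'.smul (by linarith [ht.2]))

variable [DecidableEq ι]

theorem differentiable_det_add_smul (K N : Matrix ι ι ℝ) :
    Differentiable ℝ fun t : ℝ => (K + t • N).det := by
  simp only [det_apply, add_apply, smul_apply, smul_eq_mul]
  fun_prop

theorem det_add_neg_smul (hU : Uᴴ * U = 1) (hK : Uᴴ * K * U = K) (hN : Uᴴ * N * U = -N)
    (t : ℝ) : (K + (-t) • N).det = (K + t • N).det := by
  have hdetU : Uᴴ.det * U.det = 1 := by rw [← det_mul, hU, det_one]
  rw [← conjTranspose_mul_add_smul_mul hK hN, det_mul, det_mul, mul_right_comm, hdetU, one_mul]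

theorem antitoneOn_det_add_smul (hU : Uᴴ * U = 1) (hKN : (K + N).PosSemidef)
    (hK : Uᴴ * K * U = K) (hN : Uᴴ * N * U = -N) :
    AntitoneOn (fun t : ℝ => (K + t • N).det) (Set.Icc 0 1) := by
  rintro s ⟨hs0, -⟩ t ⟨-, ht1⟩ hst
  rcases hst.eq_or_lt with rfl | hst
  · rfl
  have ht0 : 0 < t := hs0.trans_lt hst
  have hcomb : K + s • N =
      ((t + s) / (2 * t)) • (K + t • N) + ((t - s) / (2 * t)) • (K + (-t) • N) := by
    match_scalars <;> field_simp <;> ring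
  dsimp only
  rw [hcomb]
  refine (hKN.add_smul_of_mem_Icc hK hN ⟨by linarith, ht1⟩).det_le_det_add_of_det_eq
    (hKN.add_smul_of_mem_Icc hK hN ⟨by linarith, by linarith⟩) (det_add_neg_smul hU hK hN t)
    (by positivity) (div_nonneg (by linarith) (by positivity)) ?_
  field_simp
  ring

theorem deriv_det_add_smul_nonpos (hU : Uᴴ * U = 1) (hKN : (K + N).PosSemidef)
    (hK : Uᴴ * K * U = K) (hN : Uᴴ * N * U = -N) {τ : ℝ} (hτ : τ ∈ Set.Icc (0 : ℝ) 1) :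
    deriv (fun t : ℝ => (K + t • N).det) τ ≤ 0 := by
  rw [← (differentiable_det_add_smul K N τ).derivWithin (uniqueDiffOn_Icc zero_lt_one τ hτ)]
  exact (antitoneOn_det_add_smul hU hKN hK hN).derivWithin_nonpos

end SignSymmetricPencil

section BlockSign

variable {l m n : Type*}

theorem submatrix_fromBlocks_smul_smul {α : Type*} [Semiring α] (A : Matrix l l α)
    (B : Matrix l m α) (C : Matrix m l α) (D : Matrix m m α) (g : n → l ⊕ m) (t : α) :
    (fromBlocks A (t • B) (t • C) D).submatrix g g =
      (fromBlocks A 0 0 D).submatrix g g + t • (fromBlocks 0 B C 0).submatrix g g := by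
  ext i j
  simp only [submatrix_apply, add_apply, smul_apply]
  rcases g i with _ | _ <;> rcases g j with _ | _ <;> simp

variable [DecidableEq n]

def blockSign (g : n → l ⊕ m) : Matrix n n ℝ :=
  diagonal fun i => Sum.elim (fun _ => 1) (fun _ => -1) (g i)

variable [Fintype n]

theorem blockSign_conjTranspose_mul_self (g : n → l ⊕ m) : (blockSign g)ᴴ * blockSign g = 1 := by
  rw [blockSign, diagonal_conjTranspose, diagonal_mul_diagonal, ← diagonal_one]
  congr 1
  ext i
  cases hi : g i <;> simp [hi]

theorem blockSign_conjTranspose_mul_submatrix_mul (g : n → l ⊕ m) (A : Matrix l l ℝ)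
    (B : Matrix l m ℝ) (C : Matrix m l ℝ) (D : Matrix m m ℝ) :
    (blockSign g)ᴴ * (fromBlocks A B C D).submatrix g g * blockSign g =
      (fromBlocks A 0 0 D).submatrix g g - (fromBlocks 0 B C 0).submatrix g g := by
  ext i j
  simp only [blockSign, diagonal_conjTranspose, diagonal_mul, mul_diagonal, submatrix_apply,
    sub_apply]
  cases hi : g i <;> cases hj : g j <;> simp [hi]

end BlockSign

end Matrix

theorem deriv_principal_minor_nonpos_general
    (n₁ n₂ : ℕ)
    (C₁₁ : Matrix (Fin n₁) (Fin n₁) ℝ) (C₁₂ : Matrix (Fin n₁) (Fin n₂) ℝ)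
    (C₂₁ : Matrix (Fin n₂) (Fin n₁) ℝ) (C₂₂ : Matrix (Fin n₂) (Fin n₂) ℝ)
    (hC : (fromBlocks C₁₁ C₁₂ C₂₁ C₂₂).PosSemidef)
    (J : Finset (Fin n₁ ⊕ Fin n₂))
    (τ : ℝ) (hτ : τ ∈ Set.Icc (0 : ℝ) 1) :
    deriv (fun t : ℝ =>
        ((fromBlocks C₁₁ (t • C₁₂) (t • C₂₁) C₂₂).submatrix
          (fun j : {j // j ∈ J} => (j : Fin n₁ ⊕ Fin n₂))
          (fun j : {j // j ∈ J} => (j : Fin n₁ ⊕ Fin n₂))).det) τ ≤ 0 := by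
  set g : {j // j ∈ J} → Fin n₁ ⊕ Fin n₂ := fun j => j
  simp only [submatrix_fromBlocks_smul_smul]
  refine deriv_det_add_smul_nonpos (blockSign_conjTranspose_mul_self g) ?_ ?_ ?_ hτ
  · convert hC.submatrix g using 1
    simpa using (submatrix_fromBlocks_smul_smul C₁₁ C₁₂ C₂₁ C₂₂ g 1).symm
  · simpa using blockSign_conjTranspose_mul_submatrix_mul g C₁₁ 0 0 C₂₂
  · simpa using blockSign_conjTranspose_mul_submatrix_mul g 0 C₁₂ C₂₁ 0

/-- Royen's key positivity lemma: for a symmetric positive semidefinite block matrix `C`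
with off-diagonal blocks scaled by `τ`, the derivative in `τ` of every principal minor
`det(C(τ)_J)` is nonpositive on `[0,1]`, i.e. `a_J(τ) = −(d/dτ) det(C(τ)_J) ≥ 0`. -/
theorem deriv_principal_minor_nonpos
    (n₁ n₂ : ℕ) (hn₁ : 1 ≤ n₁) (hn₂ : 1 ≤ n₂)
    (C₁₁ : Matrix (Fin n₁) (Fin n₁) ℝ) (C₁₂ : Matrix (Fin n₁) (Fin n₂) ℝ)
    (C₂₁ : Matrix (Fin n₂) (Fin n₁) ℝ) (C₂₂ : Matrix (Fin n₂) (Fin n₂) ℝ)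
    (hsym : C₂₁ = C₁₂ᵀ)
    (hC : (fromBlocks C₁₁ C₁₂ C₂₁ C₂₂).PosSemidef)
    (J : Finset (Fin n₁ ⊕ Fin n₂)) (hJ : J.Nonempty)
    (τ : ℝ) (hτ : τ ∈ Set.Icc (0 : ℝ) 1) :
    deriv (fun t : ℝ =>
        ((fromBlocks C₁₁ (t • C₁₂) (t • C₂₁) C₂₂).submatrix
          (fun j : {j // j ∈ J} => (j : Fin n₁ ⊕ Fin n₂))
          (fun j : {j // j ∈ J} => (j : Fin n₁ ⊕ Fin n₂))).det) τ ≤ 0 :=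
  deriv_principal_minor_nonpos_general n₁ n₂ C₁₁ C₁₂ C₂₁ C₂₂ hC J τ hτ
end

section
/- Let n = n₁ + n₂ with n₁, n₂ ≥ 1, and let C = [[C₁₁, C₁₂],[C₂₁, C₂₂]] be a real n×n matrix in block form with C₂₂ invertible. Set K = C₁₂ C₂₂⁻¹ C₂₁ and, for τ ∈ ℝ, C(τ) = [[C₁₁, τC₁₂],[τC₂₁, C₂₂]]. Then for every τ ∈ ℝ, the derivative of τ ↦ det(C(τ)) equals −2τ · det(C₂₂) · trace(adjugate(C₁₁ − τ²K) · K). -/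
/-!
By the Schur complement with respect to the invertible block `C₂₂`,
`det C(τ) = det C₂₂ · det (C₁₁ - τ² K)`. Jacobi's formula — the derivative of `det` along
`s ↦ A + s • B` is `trace (adjugate (A + s • B) * B)` — then gives the claim by the chain rule.
Jacobi's formula itself comes from viewing `det` as a multilinear function of the rows, whose
derivative in direction `B` is `∑ i, det (M.updateRow i (B i))`; by Cramer's rule this sum is
`trace (adjugate M * B)`.
-/

open Matrix

section Jacobi

variable {𝕜 : Type*} [NontriviallyNormedField 𝕜] {n : Type*} [Fintype n] [DecidableEq n]

noncomputable def Matrix.detRowContinuousMultilinear :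
    ContinuousMultilinearMap 𝕜 (fun _ : n => n → 𝕜) 𝕜 :=
  ⟨detRowAlternating.toMultilinearMap, continuous_id.matrix_det⟩

theorem Matrix.sum_det_updateRow_eq_trace_adjugate_mul (M B : Matrix n n 𝕜) :
    ∑ i, (M.updateRow i (B i)).det = (M.adjugate * B).trace := by
  simp_rw [← cramer_transpose_apply, cramer_eq_adjugate_mulVec, ← adjugate_transpose,
    trace_mul_comm M.adjugate, trace, diag_apply, mul_apply, mulVec, dotProduct, transpose_apply]
  simp only [mul_comm]

theorem Matrix.hasDerivAt_det_add_smul (A B : Matrix n n 𝕜) (t : 𝕜) :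
    HasDerivAt (fun s : 𝕜 => (A + s • B).det) ((A + t • B).adjugate * B).trace t := by
  -- `of.symm` views the matrices as functions of their rows, with the sup norm.
  have hline : HasDerivAt (fun s => of.symm (A + s • B)) (of.symm B) t := by
    have h := ((hasDerivAt_id t).smul_const (of.symm B)).const_add (of.symm A)
    rwa [one_smul] at h
  refine (detRowContinuousMultilinear.hasFDerivAt (of.symm (A + t • B))).comp_hasDerivAt t hline
    |>.congr_deriv ?_
  rw [ContinuousMultilinearMap.linearDeriv_apply, ← sum_det_updateRow_eq_trace_adjugate_mul]
  rfl

theorem Matrix.hasDerivAt_det_sub_sq_smul (A K : Matrix n n 𝕜) (t : 𝕜) :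
    HasDerivAt (fun s : 𝕜 => (A - s ^ 2 • K).det)
      (-2 * t * ((A - t ^ 2 • K).adjugate * K).trace) t := by
  have hsub (s : 𝕜) : A - s • K = A + s • -K := by rw [smul_neg, sub_eq_add_neg]
  have hsq : HasDerivAt (fun s : 𝕜 => s ^ 2) (2 * t) t := by simpa using hasDerivAt_pow 2 t
  simp only [hsub]
  refine ((hasDerivAt_det_add_smul A (-K) (t ^ 2)).comp t hsq).congr_deriv ?_
  rw [mul_neg, trace_neg]
  ring

end Jacobi

theorem Matrix.det_fromBlocks_smul_smul {R m n : Type*} [CommRing R] [Fintype m] [DecidableEq m]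
    [Fintype n] [DecidableEq n] (A : Matrix m m R) (B : Matrix m n R) (C : Matrix n m R)
    (D : Matrix n n R) (hD : IsUnit D.det) (t : R) :
    (fromBlocks A (t • B) (t • C) D).det = D.det * (A - t ^ 2 • (B * D⁻¹ * C)).det := by
  have := D.invertibleOfIsUnitDet hD
  rw [det_fromBlocks₂₂, invOf_eq_nonsing_inv, smul_mul, smul_mul, Matrix.mul_smul, smul_smul, sq]

theorem deriv_det_interpolated_fromBlocks_general
    (n₁ n₂ : ℕ)
    (C₁₁ : Matrix (Fin n₁) (Fin n₁) ℝ) (C₁₂ : Matrix (Fin n₁) (Fin n₂) ℝ)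
    (C₂₁ : Matrix (Fin n₂) (Fin n₁) ℝ) (C₂₂ : Matrix (Fin n₂) (Fin n₂) ℝ)
    (hC₂₂ : IsUnit C₂₂.det)
    (τ : ℝ) :
    deriv (fun t : ℝ => (fromBlocks C₁₁ (t • C₁₂) (t • C₂₁) C₂₂).det) τ =
      -2 * τ * C₂₂.det *
        ((C₁₁ - (τ ^ 2) • (C₁₂ * C₂₂⁻¹ * C₂₁)).adjugate * (C₁₂ * C₂₂⁻¹ * C₂₁)).trace := by
  simp only [det_fromBlocks_smul_smul _ _ _ _ hC₂₂]
  rw [((hasDerivAt_det_sub_sq_smul C₁₁ (C₁₂ * C₂₂⁻¹ * C₂₁) τ).const_mul C₂₂.det).deriv]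
  ring

/-- The derivative of `τ ↦ det(C(τ))` equals
`−2τ · det(C₂₂) · trace(adjugate(C₁₁ − τ²K) · K)` with `K = C₁₂ C₂₂⁻¹ C₂₁`. -/
theorem deriv_det_interpolated_fromBlocks
    (n₁ n₂ : ℕ) (hn₁ : 1 ≤ n₁) (hn₂ : 1 ≤ n₂)
    (C₁₁ : Matrix (Fin n₁) (Fin n₁) ℝ) (C₁₂ : Matrix (Fin n₁) (Fin n₂) ℝ)
    (C₂₁ : Matrix (Fin n₂) (Fin n₁) ℝ) (C₂₂ : Matrix (Fin n₂) (Fin n₂) ℝ)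
    (hC₂₂ : IsUnit C₂₂.det)
    (τ : ℝ) :
    deriv (fun t : ℝ => (fromBlocks C₁₁ (t • C₁₂) (t • C₂₁) C₂₂).det) τ =
      -2 * τ * C₂₂.det *
        ((C₁₁ - (τ ^ 2) • (C₁₂ * C₂₂⁻¹ * C₂₁)).adjugate * (C₁₂ * C₂₂⁻¹ * C₂₁)).trace :=
  deriv_det_interpolated_fromBlocks_general n₁ n₂ C₁₁ C₁₂ C₂₁ C₂₂ hC₂₂ τ
end

section
/- Let n = n₁ + n₂ with n₁, n₂ ≥ 1, let C be a symmetric positive semidefinite real n×n matrix with block decomposition C = [[C₁₁, C₁₂],[C₂₁, C₂₂]] where C₂₁ = C₁₂ᵀ, and for τ ∈ ℝ let C(τ) = [[C₁₁, τC₁₂],[τC₂₁, C₂₂]]. Let t₁,…,tₙ ≥ 0 and let T = diag(t₁,…,tₙ). Then the function τ ↦ det(Iₙ + T·C(τ)) is monotone nonincreasing on [0,1]. -/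
/-!
Write `C(τ)` for the interpolated matrix and `J = diag(I, -I)`. Then `C(-τ) = J C(τ) J`, so
`C(τ)` is positive semidefinite for `|τ| ≤ 1` (it lies on the segment from `J C J` to `C`), and
`f(τ) = det(I + T C(τ))` is even because `T` commutes with `J`. Writing `T = S²`,
`f(τ) = det(I + S C(τ) S)` is the determinant along an affine path of positive definite matrices,
hence quasiconcave on `[-1, 1]` by Ky Fan's inequality `det A ^ λ * det B ^ (1 - λ) ≤
det (λ A + (1 - λ) B)`. For `0 ≤ a ≤ b ≤ 1` this gives `f(a) ≥ min (f(-b)) (f(b)) = f(b)`.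
-/

open Matrix Set

theorem QuasiconcaveOn.comp_affineMap {𝕜 E F β : Type*} [Ring 𝕜] [PartialOrder 𝕜]
    [AddCommGroup E] [AddCommGroup F] [Module 𝕜 E] [Module 𝕜 F] [LE β]
    {f : F → β} {s : Set F} (g : E →ᵃ[𝕜] F) (hf : QuasiconcaveOn 𝕜 s f) :
    QuasiconcaveOn 𝕜 (g ⁻¹' s) (f ∘ g) :=
  fun r => (hf r).affine_preimage g

theorem QuasiconcaveOn.antitoneOn_of_even {β : Type*} [LinearOrder β] {f : ℝ → β} {r : ℝ}
    (hf : QuasiconcaveOn ℝ (Icc (-r) r) f) (heven : ∀ x, f (-x) = f x) :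
    AntitoneOn f (Icc 0 r) := by
  intro a ha b hb hab
  have hneg_b : -b ∈ Icc (-r) r := ⟨neg_le_neg hb.2, by linarith [hb.1, hb.2]⟩
  have hb' : b ∈ Icc (-r) r := ⟨by linarith [hb.1, hb.2], hb.2⟩
  exact ((hf (f b)).ordConnected.out ⟨hneg_b, (heven b).ge⟩ ⟨hb', le_rfl⟩
    ⟨by linarith [ha.1, hb.1], hab⟩).2

section Convexity

variable {ι : Type*}

theorem convex_setOf_posSemidef : Convex ℝ {A : Matrix ι ι ℝ | A.PosSemidef} :=
  fun _ hA _ hB _ _ ha hb _ => (hA.smul ha).add (hB.smul hb)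

theorem convex_setOf_posDef : Convex ℝ {A : Matrix ι ι ℝ | A.PosDef} := by
  intro A hA B hB a b ha hb hab
  rcases ha.eq_or_lt with rfl | ha
  · simpa [(zero_add b).symm.trans hab] using hB
  · exact (hA.smul ha).add_posSemidef (hB.posSemidef.smul hb)

end Convexity

section KyFan

variable {ι : Type*} [Fintype ι] [DecidableEq ι]

theorem det_rpow_le_det_smul_add_smul_one {X : Matrix ι ι ℝ} (hX : X.PosSemidef)
    {l : ℝ} (h0 : 0 ≤ l) (h1 : l ≤ 1) :
    X.det ^ l ≤ (l • X + (1 - l) • 1).det := by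
  have hμ := hX.eigenvalues_nonneg
  have hsa : IsSelfAdjoint X := hX.1
  have hcfc : l • X + (1 - l) • 1 = cfc (fun x => l * x + (1 - l)) X := by
    rw [cfc_add .., cfc_const_mul .., cfc_id' .., cfc_const ..]
    simp [Algebra.algebraMap_eq_smul_one]
  have hdet : (l • X + (1 - l) • 1).det = ∏ i, (l * hX.1.eigenvalues i + (1 - l)) := by
    rw [hcfc, hX.1.cfc_eq]
    simp [IsHermitian.cfc, -Unitary.conjStarAlgAut_apply]
  have hdetX : X.det = ∏ i, hX.1.eigenvalues i := by
    simpa using hX.1.det_eq_prod_eigenvalues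
  rw [hdet, hdetX, ← Real.finsetProd_rpow _ _ fun i _ => hμ i]
  refine Finset.prod_le_prod (fun i _ => Real.rpow_nonneg (hμ i) l) fun i _ => ?_
  simpa using Real.geom_mean_le_arith_mean2_weighted h0 (sub_nonneg.2 h1) (hμ i) zero_le_one
    (by ring)

open scoped MatrixOrder in
theorem det_rpow_mul_det_rpow_le_det_smul_add_smul {A B : Matrix ι ι ℝ} (hA : A.PosSemidef)
    (hB : B.PosDef) {l : ℝ} (h0 : 0 ≤ l) (h1 : l ≤ 1) :
    A.det ^ l * B.det ^ (1 - l) ≤ (l • A + (1 - l) • B).det := by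
  -- Congruence by the square root `R` of `B` reduces to the case `B = 1`.
  obtain ⟨R, hR, hRR⟩ : ∃ R : Matrix ι ι ℝ, R.IsHermitian ∧ R * R = B :=
    ⟨CFC.sqrt B, (CFC.sqrt_nonneg B).isSelfAdjoint, CFC.sqrt_mul_sqrt_self B hB.posSemidef.nonneg⟩
  have hBdet : B.det = R.det * R.det := by rw [← hRR, det_mul]
  have hRu : IsUnit R.det := isUnit_iff_ne_zero.2 fun h => by
    simpa [h, hBdet] using hB.det_pos
  set X := R⁻¹ * A * R⁻¹
  have hX : X.PosSemidef := by
    have h := hA.mul_mul_conjTranspose_same R⁻¹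
    rwa [conjTranspose_nonsing_inv, hR.eq] at h
  have hAX : A = R * X * R := by
    simp [X, Matrix.mul_assoc, mul_nonsing_inv_cancel_left _ _ hRu, nonsing_inv_mul _ hRu]
  have hcomb : l • A + (1 - l) • B = R * (l • X + (1 - l) • 1) * R := by
    rw [hAX, ← hRR]
    simp only [Matrix.mul_add, Matrix.add_mul, Matrix.mul_smul, Matrix.smul_mul, Matrix.mul_one]
  have hdetA : A.det = B.det * X.det := by rw [hAX, hBdet, det_mul, det_mul]; ring
  have hBpos := hB.det_pos
  calc A.det ^ l * B.det ^ (1 - l) = B.det * X.det ^ l := by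
        rw [hdetA, Real.mul_rpow hBpos.le hX.det_nonneg, mul_right_comm, ← Real.rpow_add hBpos]
        simp
    _ ≤ B.det * (l • X + (1 - l) • 1).det := by
        gcongr
        exact det_rpow_le_det_smul_add_smul_one hX h0 h1
    _ = (l • A + (1 - l) • B).det := by rw [hcomb, det_mul, det_mul, hBdet]; ring

theorem quasiconcaveOn_det_posDef : QuasiconcaveOn ℝ {A : Matrix ι ι ℝ | A.PosDef} det := by
  refine quasiconcaveOn_iff_min_le.2 ⟨convex_setOf_posDef, fun A hA B hB a b ha hb hab => ?_⟩
  obtain rfl : b = 1 - a := by linarith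
  have hm : 0 ≤ min A.det B.det := le_min hA.det_pos.le hB.det_pos.le
  calc min A.det B.det = min A.det B.det ^ a * min A.det B.det ^ (1 - a) := by
        rw [← Real.rpow_add' hm (by norm_num), add_sub_cancel, Real.rpow_one]
    _ ≤ A.det ^ a * B.det ^ (1 - a) := by
        gcongr
        exacts [Real.rpow_nonneg hA.det_pos.le a, min_le_left _ _, min_le_right _ _]
    _ ≤ (a • A + (1 - a) • B).det :=
        det_rpow_mul_det_rpow_le_det_smul_add_smul hA.posSemidef hB ha (by linarith)

theorem quasiconcaveOn_det_one_add_diagonal_mul {E : Type*} [AddCommGroup E] [Module ℝ E]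
    (M : E →ᵃ[ℝ] Matrix ι ι ℝ) {s : Set E} (hs : Convex ℝ s)
    (hM : ∀ x ∈ s, (M x).PosSemidef) {t : ι → ℝ} (ht : ∀ i, 0 ≤ t i) :
    QuasiconcaveOn ℝ s fun x => (1 + diagonal t * M x).det := by
  set S : Matrix ι ι ℝ := diagonal fun i => √(t i)
  have hSS : S * S = diagonal t := by
    simp [S, diagonal_mul_diagonal, Real.mul_self_sqrt (ht _)]
  let g : E →ᵃ[ℝ] Matrix ι ι ℝ :=
    (LinearMap.mulLeft ℝ S ∘ₗ LinearMap.mulRight ℝ S).toAffineMap.comp M +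
      AffineMap.const ℝ E 1
  have hg : (fun x => (1 + diagonal t * M x).det) = det ∘ g := funext fun x => by
    rw [Function.comp_apply, ← hSS, Matrix.mul_assoc, det_one_add_mul_comm]
    simp [g, add_comm, Matrix.mul_assoc]
  have hg_posDef : s ⊆ g ⁻¹' {A | A.PosDef} := fun x hx => by
    have h := (hM x hx).mul_mul_conjTranspose_same S
    simpa [g, S, add_comm, Matrix.mul_assoc] using PosDef.one.add_posSemidef h
  rw [hg]
  exact hs.quasiconcaveOn_restrict (quasiconcaveOn_det_posDef.comp_affineMap g) hg_posDef

end KyFan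

theorem det_one_add_mul_conj_eq {ι R : Type*} [Fintype ι] [DecidableEq ι] [CommRing R]
    {T E : Matrix ι ι R} (hE : E * E = 1) (hTE : Commute T E) (M : Matrix ι ι R) :
    (1 + T * (E * M * E)).det = (1 + T * M).det := by
  have hconj : 1 + T * (E * M * E) = E * (1 + T * M) * E := by
    rw [Matrix.mul_add, Matrix.add_mul, Matrix.mul_one, hE, ← Matrix.mul_assoc E T,
      ← hTE.eq, Matrix.mul_assoc, Matrix.mul_assoc, Matrix.mul_assoc]
  rw [hconj, det_mul, det_mul, mul_right_comm, ← det_mul, hE, det_one, one_mul]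

theorem lineMap_fromBlocks_apply {ι₁ ι₂ R : Type*} [CommRing R] (A : Matrix ι₁ ι₁ R)
    (B : Matrix ι₁ ι₂ R) (C : Matrix ι₂ ι₁ R) (D : Matrix ι₂ ι₂ R) (τ : R) :
    AffineMap.lineMap (fromBlocks A 0 0 D) (fromBlocks A B C D) τ =
      fromBlocks A (τ • B) (τ • C) D := by
  rw [AffineMap.lineMap_apply_module']
  ext (i | i) (j | j) <;> simp

section SignFlip

variable {ι₁ ι₂ : Type*} [DecidableEq ι₁] [DecidableEq ι₂]

def signFlip (ι₁ ι₂ : Type*) [DecidableEq ι₁] [DecidableEq ι₂] :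
    Matrix (ι₁ ⊕ ι₂) (ι₁ ⊕ ι₂) ℝ :=
  diagonal (Sum.elim 1 (-1))

theorem transpose_signFlip : (signFlip ι₁ ι₂)ᵀ = signFlip ι₁ ι₂ :=
  diagonal_transpose _

theorem signFlip_eq_fromBlocks : signFlip ι₁ ι₂ = fromBlocks 1 0 0 (-1) := by
  ext (i | i) (j | j) <;> simp [signFlip, one_apply, diagonal_apply, apply_ite]

variable [Fintype ι₁] [Fintype ι₂]

theorem signFlip_mul_self : signFlip ι₁ ι₂ * signFlip ι₁ ι₂ = 1 := by
  simp [signFlip_eq_fromBlocks, fromBlocks_multiply]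

theorem commute_diagonal_signFlip (t : ι₁ ⊕ ι₂ → ℝ) :
    Commute (diagonal t) (signFlip ι₁ ι₂) := by
  simp [Commute, SemiconjBy, signFlip, diagonal_mul_diagonal, mul_comm]

theorem signFlip_mul_fromBlocks_mul_signFlip (A : Matrix ι₁ ι₁ ℝ) (B : Matrix ι₁ ι₂ ℝ)
    (C : Matrix ι₂ ι₁ ℝ) (D : Matrix ι₂ ι₂ ℝ) :
    signFlip ι₁ ι₂ * fromBlocks A B C D * signFlip ι₁ ι₂ = fromBlocks A (-B) (-C) D := by
  simp [signFlip_eq_fromBlocks, fromBlocks_multiply]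

theorem posSemidef_fromBlocks_smul_offDiag {A : Matrix ι₁ ι₁ ℝ} {B : Matrix ι₁ ι₂ ℝ}
    {C : Matrix ι₂ ι₁ ℝ} {D : Matrix ι₂ ι₂ ℝ} (h : (fromBlocks A B C D).PosSemidef) {τ : ℝ}
    (hτ : τ ∈ Icc (-1) 1) : (fromBlocks A (τ • B) (τ • C) D).PosSemidef := by
  have hneg : (fromBlocks A (-B) (-C) D).PosSemidef := by
    simpa [transpose_signFlip, signFlip_mul_fromBlocks_mul_signFlip] using
      h.mul_mul_conjTranspose_same (signFlip ι₁ ι₂)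
  let P : ℝ →ᵃ[ℝ] Matrix (ι₁ ⊕ ι₂) (ι₁ ⊕ ι₂) ℝ :=
    AffineMap.lineMap (fromBlocks A 0 0 D) (fromBlocks A B C D)
  have hP : ∀ σ, P σ = fromBlocks A (σ • B) (σ • C) D := lineMap_fromBlocks_apply A B C D
  rw [← hP]
  refine (convex_setOf_posSemidef.affine_preimage P).ordConnected.out ?_ ?_ hτ
  · simpa [hP] using hneg
  · simpa [hP] using h

end SignFlip

theorem det_one_add_diagonal_mul_interpolated_antitone_general
    (n₁ n₂ : ℕ)
    (C₁₁ : Matrix (Fin n₁) (Fin n₁) ℝ) (C₁₂ : Matrix (Fin n₁) (Fin n₂) ℝ)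
    (C₂₁ : Matrix (Fin n₂) (Fin n₁) ℝ) (C₂₂ : Matrix (Fin n₂) (Fin n₂) ℝ)
    (hC : (fromBlocks C₁₁ C₁₂ C₂₁ C₂₂).PosSemidef)
    (t : Fin n₁ ⊕ Fin n₂ → ℝ) (ht : ∀ i, 0 ≤ t i) :
    AntitoneOn (fun τ : ℝ =>
        (1 + Matrix.diagonal t * fromBlocks C₁₁ (τ • C₁₂) (τ • C₂₁) C₂₂).det)
      (Set.Icc (0 : ℝ) 1) := by
  let P : ℝ →ᵃ[ℝ] Matrix (Fin n₁ ⊕ Fin n₂) (Fin n₁ ⊕ Fin n₂) ℝ :=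
    AffineMap.lineMap (fromBlocks C₁₁ 0 0 C₂₂) (fromBlocks C₁₁ C₁₂ C₂₁ C₂₂)
  have hP : ∀ τ, P τ = fromBlocks C₁₁ (τ • C₁₂) (τ • C₂₁) C₂₂ :=
    lineMap_fromBlocks_apply _ _ _ _
  have hq : QuasiconcaveOn ℝ (Icc (-1) 1) fun τ => (1 + diagonal t * P τ).det :=
    quasiconcaveOn_det_one_add_diagonal_mul P (convex_Icc _ _)
      (fun τ hτ => hP τ ▸ posSemidef_fromBlocks_smul_offDiag hC hτ) ht
  have heven : ∀ τ, (1 + diagonal t * P (-τ)).det = (1 + diagonal t * P τ).det := fun τ => by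
    rw [hP, hP, neg_smul, neg_smul, ← signFlip_mul_fromBlocks_mul_signFlip,
      det_one_add_mul_conj_eq signFlip_mul_self (commute_diagonal_signFlip t)]
  simpa only [hP] using hq.antitoneOn_of_even heven

/-- Monotonicity of the determinant `det(Iₙ + T C(τ))` (the reciprocal Laplace transform
of the interpolated multivariate Gamma distribution) for a nonnegative diagonal `T`:
it is nonincreasing in `τ` on `[0,1]`. -/
theorem det_one_add_diagonal_mul_interpolated_antitone
    (n₁ n₂ : ℕ) (hn₁ : 1 ≤ n₁) (hn₂ : 1 ≤ n₂)
    (C₁₁ : Matrix (Fin n₁) (Fin n₁) ℝ) (C₁₂ : Matrix (Fin n₁) (Fin n₂) ℝ)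
    (C₂₁ : Matrix (Fin n₂) (Fin n₁) ℝ) (C₂₂ : Matrix (Fin n₂) (Fin n₂) ℝ)
    (hsym : C₂₁ = C₁₂ᵀ)
    (hC : (fromBlocks C₁₁ C₁₂ C₂₁ C₂₂).PosSemidef)
    (t : Fin n₁ ⊕ Fin n₂ → ℝ) (ht : ∀ i, 0 ≤ t i) :
    AntitoneOn (fun τ : ℝ =>
        (1 + Matrix.diagonal t * fromBlocks C₁₁ (τ • C₁₂) (τ • C₂₁) C₂₂).det)
      (Set.Icc (0 : ℝ) 1) :=
  det_one_add_diagonal_mul_interpolated_antitone_general n₁ n₂ C₁₁ C₁₂ C₂₁ C₂₂ hC t ht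
end
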